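/- Let R be a graded unit-regular Γ-graded ring. Then the degree-zero subring 𝒜 0 is unit-regular: for every x ∈ 𝒜 0 there exist u, w ∈ 𝒜 0 with u*w = 1, w*u = 1 and x*u*x = x. -/
import Mathlib


/-- An element of `R` is homogeneous with respect to the grading `𝒜` if it lies in some
component `𝒜 γ`. -/
def IsHomogeneousElem {Γ R : Type*} [AddGroup Γ] [Ring R]
    (𝒜 : Γ → AddSubgroup R) (x : R) : Prop :=
  ∃ γ : Γ, x ∈ 𝒜 γ

/-- `R` is graded unit-regular: every homogeneous `x` admits homogeneous `u, v` with
`u*v = v*u = 1` and `x*u*x = x`. -/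
def GradedUnitRegular {Γ R : Type*} [AddGroup Γ] [Ring R]
    (𝒜 : Γ → AddSubgroup R) : Prop :=
  ∀ x : R, IsHomogeneousElem 𝒜 x →
    ∃ u v : R, IsHomogeneousElem 𝒜 u ∧ IsHomogeneousElem 𝒜 v ∧
      u * v = 1 ∧ v * u = 1 ∧ x * u * x = x

/-- Auxiliary: an element in two distinct graded components is zero. -/
lemma mem_two_components_eq_zero {Γ R : Type*} [AddGroup Γ] [DecidableEq Γ] [Ring R]
    (𝒜 : Γ → AddSubgroup R) [GradedRing 𝒜] {x : R} {i j : Γ}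
    (hi : x ∈ 𝒜 i) (hj : x ∈ 𝒜 j) (hij : i ≠ j) : x = 0 := by
  have h1 : (DirectSum.decompose 𝒜 x i : R) = x :=
    DirectSum.decompose_of_mem_same 𝒜 hi
  have h2 : (DirectSum.decompose 𝒜 x i : R) = 0 :=
    DirectSum.decompose_of_mem_ne 𝒜 hj (Ne.symm hij)
  rw [h1] at h2; exact h2

/-- If a `Γ`-graded ring `R` is graded unit-regular, then the degree-zero subring `𝒜 0`
is unit-regular. -/
theorem unitRegular_zeroComponent_of_gradedUnitRegular
    {Γ R : Type*} [AddGroup Γ] [DecidableEq Γ] [Ring R]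
    (𝒜 : Γ → AddSubgroup R) [GradedRing 𝒜]
    (h : GradedUnitRegular 𝒜) :
    ∀ x ∈ 𝒜 (0 : Γ), ∃ u ∈ 𝒜 (0 : Γ), ∃ w ∈ 𝒜 (0 : Γ),
      u * w = 1 ∧ w * u = 1 ∧ x * u * x = x := by
  intro x hx
  have h1 : (1 : R) ∈ 𝒜 (0 : Γ) := SetLike.one_mem_graded 𝒜
  by_cases hx0 : x = 0
  · exact ⟨1, h1, 1, h1, one_mul 1, one_mul 1, by simp [hx0]⟩
  obtain ⟨u, v, ⟨γ, hu⟩, ⟨δ, hv⟩, huv, hvu, hxu⟩ := h x ⟨0, hx⟩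
  -- show γ = 0
  have hm : x * u * x ∈ 𝒜 ((0 : Γ) + γ + 0) :=
    SetLike.mul_mem_graded (SetLike.mul_mem_graded hx hu) hx
  rw [hxu, add_zero, zero_add] at hm
  have hγ : γ = 0 := by
    by_contra hne
    exact hx0 (mem_two_components_eq_zero 𝒜 hm hx hne)
  subst hγ
  -- show δ = 0
  have hm2 : u * v ∈ 𝒜 ((0 : Γ) + δ) := SetLike.mul_mem_graded hu hv
  rw [huv, zero_add] at hm2
  have h10 : (1 : R) ≠ 0 := by
    intro h10
    exact hx0 (by rw [← mul_one x, h10, mul_zero])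
  have hδ : δ = 0 := by
    by_contra hne
    exact h10 (mem_two_components_eq_zero 𝒜 hm2 h1 hne)
  subst hδ
  exact ⟨u, hu, v, hv, huv, hvu, hxu⟩
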